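/- arXiv:1201.3716 — 2 statements merged into one kernel-verified Lean document; each statement's English description precedes it below -/
import Mathlib

section
/- Let Γ be a group acting on a nonempty set X, and let δ and d be Γ-invariant pseudometrics on X with δ(x,y) ≤ d(x,y) for all x, y ∈ X. Assume: (i) for every γ ∈ Γ, inf_{z ∈ X} δ(z, γ·z) = inf_{z ∈ X} d(z, γ·z); and (ii) for all x, y ∈ X there exists γ ∈ Γ such that d(x, γ·x) = inf_{z ∈ X} d(z, γ·z) and d(x,y) + d(y, γ·x) = d(x, γ·x). Then δ = d, i.e. δ(x,y) = d(x,y) for all x, y ∈ X. -/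
/-!
For `γ` given by the axis hypothesis, writing `ℓ_d(γ) = inf_z d(z,γz)` for translation length,
`d(x,y) + d(y,γx) = d(x,γx) = ℓ_d(γ) = ℓ_δ(γ) ≤ δ(x,γx) ≤ δ(x,y) + δ(y,γx)`,
and since `δ ≤ d` termwise, every inequality in this chain is an equality.
-/

/-- A pseudometric on a set `X`: nonnegative, vanishing on the diagonal, symmetric,
and satisfying the triangle inequality. -/
def IsPseudometric {X : Type*} (d : X → X → ℝ) : Prop :=
  (∀ x y, 0 ≤ d x y) ∧ (∀ x, d x x = 0) ∧ (∀ x y, d x y = d y x) ∧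
    (∀ x y z, d x z ≤ d x y + d y z)

theorem iInf_displacement_le {Γ X : Type*} [SMul Γ X] {δ : X → X → ℝ}
    (hδ : ∀ x y, 0 ≤ δ x y) (γ : Γ) (x : X) : (⨅ z : X, δ z (γ • z)) ≤ δ x (γ • x) :=
  ciInf_le ⟨0, by rintro _ ⟨z, rfl⟩; exact hδ z (γ • z)⟩ x

theorem eq_of_le_of_add_le {X : Type*} {δ d : X → X → ℝ}
    (hδ : ∀ x y z, δ x z ≤ δ x y + δ y z) (hle : ∀ x y, δ x y ≤ d x y)
    {x y z : X} (h : d x y + d y z ≤ δ x z) : δ x y = d x y := by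
  linarith [hδ x y z, hle x y, hle y z]

theorem stmt4_general {Γ X : Type*} [Group Γ] [MulAction Γ X]
    (δ d : X → X → ℝ)
    (hδ : IsPseudometric δ)
    (hle : ∀ x y, δ x y ≤ d x y)
    (hspec : ∀ γ : Γ, (⨅ z : X, δ z (γ • z)) = ⨅ z : X, d z (γ • z))
    (haxis : ∀ x y : X, ∃ γ : Γ,
      d x (γ • x) = (⨅ z : X, d z (γ • z)) ∧ d x y + d y (γ • x) = d x (γ • x)) :
    ∀ x y : X, δ x y = d x y := by
  intro x y
  obtain ⟨γ, hmin, hbetween⟩ := haxis x y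
  refine eq_of_le_of_add_le hδ.2.2.2 hle (z := γ • x) ?_
  calc d x y + d y (γ • x) = d x (γ • x) := hbetween
    _ = ⨅ z : X, δ z (γ • z) := hmin.trans (hspec γ).symm
    _ ≤ δ x (γ • x) := iInf_displacement_le hδ.1 γ x

/-- if `δ ≤ d` are Γ-invariant pseudometrics on a nonempty `X` with the same
translation lengths, and every pair `(x, y)` lies in a configuration where some `γ` realizes
its translation length at `x` with `y` metrically between `x` and `γ·x`, then `δ = d`. -/
theorem stmt4 {Γ X : Type*} [Group Γ] [MulAction Γ X] [Nonempty X]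
    (δ d : X → X → ℝ)
    (hδ : IsPseudometric δ) (hd : IsPseudometric d)
    (hδinv : ∀ (γ : Γ) (x y : X), δ (γ • x) (γ • y) = δ x y)
    (hdinv : ∀ (γ : Γ) (x y : X), d (γ • x) (γ • y) = d x y)
    (hle : ∀ x y, δ x y ≤ d x y)
    (hspec : ∀ γ : Γ, (⨅ z : X, δ z (γ • z)) = ⨅ z : X, d z (γ • z))
    (haxis : ∀ x y : X, ∃ γ : Γ,
      d x (γ • x) = (⨅ z : X, d z (γ • z)) ∧ d x y + d y (γ • x) = d x (γ • x)) :
    ∀ x y : X, δ x y = d x y :=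
  stmt4_general δ d hδ hle hspec haxis
end

section
/- Equip ℝ³ with the Minkowski bilinear form B(u,v) = −u₀v₀ + u₁v₁ + u₂v₂. Let Ω ⊆ ℝ³ be open and let T : Ω → ℝ be a C² function whose Minkowski gradient ∇T(p) := (−∂₀T(p), ∂₁T(p), ∂₂T(p)) (characterized by B(∇T(p), u) = D T(p)(u) for all u ∈ ℝ³) satisfies B(∇T(p), ∇T(p)) < 0 for all p ∈ Ω. Define λ(p) = (−B(∇T(p), ∇T(p)))^{−1/2}, the unit normal n(p) = −λ(p)·∇T(p), and the vector field ξ(p) = ∇T(p) / B(∇T(p), ∇T(p)). Assume T is quasi-concave in the sense that for every p ∈ Ω and every X ∈ ℝ³ with B(∇T(p), X) = 0 one has B((D n(p))(X), X) ≥ 0, where D n(p) is the (total) derivative of n at p. Let v : Ω → ℝ³ be a differentiable vector field such that B(∇T(p), v(p)) = 0 for all p ∈ Ω and (D v(p))(ξ(p)) = (D ξ(p))(v(p)) for all p ∈ Ω. Then for every p ∈ Ω, the directional derivative of the function q ↦ B(v(q), v(q)) at p in the direction ξ(p) equals 2·λ(p)·B((D n(p))(v(p)), v(p)), and in particular is nonnegative.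 -/
/-
Differentiating `B(v,v)` along `ξ` gives `2 B(D_ξ v, v)`, and since `v` commutes with `ξ` this is
`2 B(D_v ξ, v)`. On `Ω` we have `ξ = λ n` (because `λ² = -1/B(∇T,∇T)`), so
`D_v ξ = λ D_v n + (D_v λ) n`; the second term is orthogonal to `v` because `v` is tangent to the
level sets, leaving `2 λ B(D_v n, v)`. Finally `λ > 0` and quasi-concavity make this nonnegative.
-/

open Real

/-- The Minkowski bilinear form on `ℝ³`: `B(u,v) = −u₀v₀ + u₁v₁ + u₂v₂`. -/
noncomputable def mink (u v : Fin 3 → ℝ) : ℝ :=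
  -(u 0 * v 0) + u 1 * v 1 + u 2 * v 2

open Filter Topology

section SymmetricBilinear

variable {E : Type*} [NormedAddCommGroup E] [NormedSpace ℝ E]
  (B : E →L[ℝ] E →L[ℝ] ℝ) (hB : ∀ x y, B x y = B y x)
  {v n : E → E} {lam : E → ℝ} {p : E}

include hB in
theorem fderiv_bilin_self_apply (hv : DifferentiableAt ℝ v p) (w : E) :
    fderiv ℝ (fun q => B (v q) (v q)) p w = 2 * B (fderiv ℝ v p w) (v p) := by
  have hBv : HasFDerivAt (fun q => B (v q)) (B.comp (fderiv ℝ v p)) p :=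
    B.hasFDerivAt.comp p hv.hasFDerivAt
  rw [(hBv.clm_apply hv.hasFDerivAt).fderiv]
  simp only [add_apply, ContinuousLinearMap.comp_apply,
    ContinuousLinearMap.flip_apply, hB (v p)]
  ring

include hB in
theorem fderiv_bilin_self_apply_smul_of_commute (hv : DifferentiableAt ℝ v p)
    (hlam : DifferentiableAt ℝ lam p) (hn : DifferentiableAt ℝ n p)
    (hcomm : fderiv ℝ v p (lam p • n p) = fderiv ℝ (fun q => lam q • n q) p (v p))
    (horth : B (n p) (v p) = 0) :
    fderiv ℝ (fun q => B (v q) (v q)) p (lam p • n p)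
      = 2 * lam p * B (fderiv ℝ n p (v p)) (v p) := by
  rw [fderiv_bilin_self_apply B hB hv, hcomm, fderiv_fun_smul hlam hn]
  simp only [add_apply, smul_apply, ContinuousLinearMap.smulRight_apply, map_add, map_smul,
    horth, smul_eq_mul]
  ring

end SymmetricBilinear

noncomputable def minkCLM : (Fin 3 → ℝ) →L[ℝ] (Fin 3 → ℝ) →L[ℝ] ℝ :=
  let e (i : Fin 3) : (Fin 3 → ℝ) →L[ℝ] ℝ := ContinuousLinearMap.proj i;
  -(e 0).smulRight (e 0) + (e 1).smulRight (e 1) + (e 2).smulRight (e 2)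

@[simp]
theorem minkCLM_apply (u w : Fin 3 → ℝ) : minkCLM u w = mink u w := by
  simp [minkCLM, mink]

theorem mink_comm (u w : Fin 3 → ℝ) : mink u w = mink w u := by
  simp only [mink]; ring

theorem DifferentiableAt.mink {E : Type*} [NormedAddCommGroup E] [NormedSpace ℝ E]
    {f g : E → Fin 3 → ℝ} {p : E} (hf : DifferentiableAt ℝ f p) (hg : DifferentiableAt ℝ g p) :
    DifferentiableAt ℝ (fun q => _root_.mink (f q) (g q)) p := by
  simpa using (minkCLM.differentiableAt.comp p hf).clm_apply hg

noncomputable def minkGrad (T : (Fin 3 → ℝ) → ℝ) (q : Fin 3 → ℝ) : Fin 3 → ℝ := fun i =>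
  if i = 0 then -(fderiv ℝ T q (fun j => if j = 0 then 1 else 0))
  else fderiv ℝ T q (fun j => if j = i then 1 else 0)

theorem differentiableAt_minkGrad {T : (Fin 3 → ℝ) → ℝ} {p : Fin 3 → ℝ}
    (hT : ContDiffAt ℝ 2 T p) : DifferentiableAt ℝ (minkGrad T) p := by
  have hDT : DifferentiableAt ℝ (fderiv ℝ T) p :=
    (hT.fderiv_right (m := 1) (by norm_num)).differentiableAt one_ne_zero
  refine differentiableAt_pi.2 fun i => ?_
  unfold minkGrad
  split_ifs
  · exact (hDT.clm_apply (differentiableAt_const _)).neg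
  · exact hDT.clm_apply (differentiableAt_const _)

theorem rpow_neg_half_mul_self {x : ℝ} (hx : 0 < x) :
    x ^ (-(1/2 : ℝ)) * x ^ (-(1/2 : ℝ)) = x⁻¹ := by
  rw [← Real.rpow_add hx]
  norm_num [Real.rpow_neg_one]

theorem stmt5_general (Ω : Set (Fin 3 → ℝ)) (hΩ : IsOpen Ω)
    (T : (Fin 3 → ℝ) → ℝ) (hT : ContDiffOn ℝ 2 T Ω)
    (gradT : (Fin 3 → ℝ) → (Fin 3 → ℝ))
    (hgradT : ∀ p ∈ Ω, gradT p = fun i =>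
      if i = 0 then -(fderiv ℝ T p (fun j => if j = 0 then 1 else 0))
      else fderiv ℝ T p (fun j => if j = i then 1 else 0))
    (htimelike : ∀ p ∈ Ω, mink (gradT p) (gradT p) < 0)
    (lam : (Fin 3 → ℝ) → ℝ)
    (hlam : ∀ p ∈ Ω, lam p = (-(mink (gradT p) (gradT p))) ^ (-(1/2 : ℝ)))
    (n : (Fin 3 → ℝ) → (Fin 3 → ℝ))
    (hn : ∀ p ∈ Ω, n p = -(lam p) • gradT p)
    (ξ : (Fin 3 → ℝ) → (Fin 3 → ℝ))
    (hξ : ∀ p ∈ Ω, ξ p = (mink (gradT p) (gradT p))⁻¹ • gradT p)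
    (hquasiconcave : ∀ p ∈ Ω, ∀ X : Fin 3 → ℝ,
      mink (gradT p) X = 0 → 0 ≤ mink (fderiv ℝ n p X) X)
    (v : (Fin 3 → ℝ) → (Fin 3 → ℝ))
    (hvdiff : ∀ p ∈ Ω, DifferentiableAt ℝ v p)
    (hvtangent : ∀ p ∈ Ω, mink (gradT p) (v p) = 0)
    (hvcommute : ∀ p ∈ Ω, fderiv ℝ v p (ξ p) = fderiv ℝ ξ p (v p)) :
    ∀ p ∈ Ω,
      fderiv ℝ (fun q => mink (v q) (v q)) p (ξ p)
        = 2 * lam p * mink (fderiv ℝ n p (v p)) (v p) ∧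
      0 ≤ fderiv ℝ (fun q => mink (v q) (v q)) p (ξ p) := by
  intro p hp
  have hΩp : Ω ∈ 𝓝 p := hΩ.mem_nhds hp
  have hG : DifferentiableAt ℝ gradT p :=
    (differentiableAt_minkGrad (hT.contDiffAt hΩp)).congr_of_eventuallyEq
      (eventually_of_mem hΩp hgradT)
  have hlamp : DifferentiableAt ℝ lam p :=
    ((hG.mink hG).neg.rpow_const (Or.inl (neg_pos.2 (htimelike p hp)).ne')).congr_of_eventuallyEq
      (eventually_of_mem hΩp hlam)
  have hnp : DifferentiableAt ℝ n p :=
    (hlamp.neg.smul hG).congr_of_eventuallyEq (eventually_of_mem hΩp hn)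
  have hξ_eq : ξ =ᶠ[𝓝 p] fun q => lam q • n q := by
    filter_upwards [hΩp] with q hq
    rw [hξ q hq, hn q hq, hlam q hq, smul_smul, mul_neg,
      rpow_neg_half_mul_self (neg_pos.2 (htimelike q hq)), inv_neg, neg_neg]
  have hξp : ξ p = lam p • n p := hξ_eq.self_of_nhds
  have hformula : fderiv ℝ (fun q => mink (v q) (v q)) p (ξ p)
      = 2 * lam p * mink (fderiv ℝ n p (v p)) (v p) := by
    have key := fderiv_bilin_self_apply_smul_of_commute minkCLM (by simpa using mink_comm)
      (hvdiff p hp) hlamp hnp (by rw [← hξp, ← hξ_eq.fderiv_eq]; exact hvcommute p hp)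
      (by simp [hn p hp, hvtangent p hp])
    simp only [minkCLM_apply] at key
    rwa [hξp]
  have hlam_pos : 0 < lam p := hlam p hp ▸ Real.rpow_pos_of_pos (neg_pos.2 (htimelike p hp)) _
  refine ⟨hformula, hformula ▸ ?_⟩
  have := hquasiconcave p hp (v p) (hvtangent p hp)
  positivity

/-- on a domain `Ω` of Minkowski space `ℝ^{1,2}`, let `T` be a `C²`
quasi-concave time function with timelike Minkowski gradient `∇T`, let
`λ = (−B(∇T,∇T))^{-1/2}`, `n = −λ·∇T` the future unit normal, and
`ξ = ∇T / B(∇T,∇T)`. If `v` is a differentiable vector field tangent to the level sets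
of `T` commuting with `ξ`, then `ξ·B(v,v) = 2 λ B(Dn(v), v) ≥ 0`. -/
theorem stmt5 (Ω : Set (Fin 3 → ℝ)) (hΩ : IsOpen Ω)
    (T : (Fin 3 → ℝ) → ℝ) (hT : ContDiffOn ℝ 2 T Ω)
    (gradT : (Fin 3 → ℝ) → (Fin 3 → ℝ))
    (hgradT : ∀ p ∈ Ω, gradT p = fun i =>
      if i = 0 then -(fderiv ℝ T p (fun j => if j = 0 then 1 else 0))
      else fderiv ℝ T p (fun j => if j = i then 1 else 0))
    (hchar : ∀ p ∈ Ω, ∀ u : Fin 3 → ℝ, mink (gradT p) u = fderiv ℝ T p u)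
    (htimelike : ∀ p ∈ Ω, mink (gradT p) (gradT p) < 0)
    (lam : (Fin 3 → ℝ) → ℝ)
    (hlam : ∀ p ∈ Ω, lam p = (-(mink (gradT p) (gradT p))) ^ (-(1/2 : ℝ)))
    (n : (Fin 3 → ℝ) → (Fin 3 → ℝ))
    (hn : ∀ p ∈ Ω, n p = -(lam p) • gradT p)
    (ξ : (Fin 3 → ℝ) → (Fin 3 → ℝ))
    (hξ : ∀ p ∈ Ω, ξ p = (mink (gradT p) (gradT p))⁻¹ • gradT p)
    (hquasiconcave : ∀ p ∈ Ω, ∀ X : Fin 3 → ℝ,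
      mink (gradT p) X = 0 → 0 ≤ mink (fderiv ℝ n p X) X)
    (v : (Fin 3 → ℝ) → (Fin 3 → ℝ))
    (hvdiff : ∀ p ∈ Ω, DifferentiableAt ℝ v p)
    (hvtangent : ∀ p ∈ Ω, mink (gradT p) (v p) = 0)
    (hvcommute : ∀ p ∈ Ω, fderiv ℝ v p (ξ p) = fderiv ℝ ξ p (v p)) :
    ∀ p ∈ Ω,
      fderiv ℝ (fun q => mink (v q) (v q)) p (ξ p)
        = 2 * lam p * mink (fderiv ℝ n p (v p)) (v p) ∧
      0 ≤ fderiv ℝ (fun q => mink (v q) (v q)) p (ξ p) :=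
  stmt5_general Ω hΩ T hT gradT hgradT htimelike lam hlam n hn ξ hξ hquasiconcave v hvdiff hvtangent
    hvcommute
end
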